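/- arXiv:1305.5928 — 2 statements merged into one kernel-verified Lean document; each statement's English description precedes it below -/
import Mathlib

section
/- Let F be the free group on three generators a, b, c, and consider the relators r₁ = a·c·b⁻¹·a⁻¹·c⁻¹·a·c·b·c⁻¹, r₂ = a·a·b⁻¹·c·b·a·b·c⁻¹, r₃ = a·b·a⁻¹·b⁻¹·c·c. Then the presented group with generators a, b, c and relator set {r₁, r₂, r₃, a, b³} (i.e., the group obtained from ⟨a,b,c | r₁, r₂, r₃⟩ by adding the relations a = 1 and b³ = 1) is isomorphic to the dihedral group of order 6. -/
/-!
Once `a = 1`, the relator `r₁` becomes trivial, `r₃` says `c² = 1` and `r₂` says `c b² c⁻¹ = b`,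
which by `b³ = 1` is `c b c⁻¹ = b⁻¹`. These are the defining relations of the dihedral group of
order 6 with rotation `b` and reflection `c`, so `a, b, c ↦ 1, r 1, sr 0` and
`r i ↦ bⁱ, sr i ↦ c bⁱ` are mutually inverse homomorphisms.
-/

namespace Stmt0

/-- The generator `a` of the free group on three generators. -/
def a : FreeGroup (Fin 3) := FreeGroup.of 0
/-- The generator `b` of the free group on three generators. -/
def b : FreeGroup (Fin 3) := FreeGroup.of 1
/-- The generator `c` of the free group on three generators. -/
def c : FreeGroup (Fin 3) := FreeGroup.of 2

/-- The relator `r₁ = a·c·b⁻¹·a⁻¹·c⁻¹·a·c·b·c⁻¹`. -/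
def r₁ : FreeGroup (Fin 3) := a * c * b⁻¹ * a⁻¹ * c⁻¹ * a * c * b * c⁻¹
/-- The relator `r₂ = a·a·b⁻¹·c·b·a·b·c⁻¹`. -/
def r₂ : FreeGroup (Fin 3) := a * a * b⁻¹ * c * b * a * b * c⁻¹
/-- The relator `r₃ = a·b·a⁻¹·b⁻¹·c·c`. -/
def r₃ : FreeGroup (Fin 3) := a * b * a⁻¹ * b⁻¹ * c * c

end Stmt0

section

variable {n : ℕ} {G : Type*} [Group G] {x y : G}

theorem ZMod.zpow_cast_add (hx : x ^ n = 1) (i j : ZMod n) :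
    x ^ (ZMod.cast (i + j) : ℤ) = x ^ (ZMod.cast i : ℤ) * x ^ (ZMod.cast j : ℤ) := by
  rw [ZMod.intCast_cast_add, ← zpow_eq_zpow_emod' _ hx, zpow_add]

theorem ZMod.zpow_cast_sub (hx : x ^ n = 1) (i j : ZMod n) :
    x ^ (ZMod.cast (i - j) : ℤ) = x ^ (ZMod.cast i : ℤ) * (x ^ (ZMod.cast j : ℤ))⁻¹ := by
  rw [ZMod.intCast_cast_sub, ← zpow_eq_zpow_emod' _ hx, zpow_sub]

theorem ZMod.zpow_cast_intCast (hx : x ^ n = 1) (k : ℤ) :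
    x ^ (ZMod.cast (k : ZMod n) : ℤ) = x ^ k := by
  rw [ZMod.coe_intCast, ← zpow_eq_zpow_emod' _ hx]

theorem zpow_mul_eq_mul_inv_zpow (hyx : y * x * y⁻¹ = x⁻¹) (k : ℤ) :
    x ^ k * y = y * (x ^ k)⁻¹ := by
  rw [← zpow_neg, eq_comm, ← mul_inv_eq_iff_eq_mul, ← conj_zpow, hyx, inv_zpow, zpow_neg, inv_inv]

end

namespace DihedralGroup

variable {n : ℕ} {G : Type*} [Group G] {x y : G}

-- Exponents are taken through `ZMod.cast : ZMod n → ℤ` rather than `ZMod.val`, so that the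
-- construction is also a homomorphism for `n = 0`, where `ZMod 0 = ℤ`.
def lift (hx : x ^ n = 1) (hy : y ^ 2 = 1) (hyx : y * x * y⁻¹ = x⁻¹) : DihedralGroup n →* G where
  toFun
    | r i => x ^ (ZMod.cast i : ℤ)
    | sr i => y * x ^ (ZMod.cast i : ℤ)
  map_one' := show x ^ (ZMod.cast (0 : ZMod n) : ℤ) = 1 by rw [ZMod.cast_zero, zpow_zero]
  map_mul' := by
    have hyy : y * y = 1 := by rw [← pow_two, hy]
    rintro (i | i) (j | j) <;>
      simp only [r_mul_r, r_mul_sr, sr_mul_r, sr_mul_sr, ZMod.zpow_cast_add hx,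
        ZMod.zpow_cast_sub hx]
    · rw [← mul_assoc (x ^ _), zpow_mul_eq_mul_inv_zpow hyx]
      group
    · group
    · rw [mul_assoc y, ← mul_assoc (x ^ _), zpow_mul_eq_mul_inv_zpow hyx, ← mul_assoc,
        ← mul_assoc, hyy]
      group

section lift

variable (hx : x ^ n = 1) (hy : y ^ 2 = 1) (hyx : y * x * y⁻¹ = x⁻¹)

theorem lift_apply_r (i : ZMod n) : lift hx hy hyx (r i) = x ^ (ZMod.cast i : ℤ) := rfl

theorem lift_apply_sr (i : ZMod n) : lift hx hy hyx (sr i) = y * x ^ (ZMod.cast i : ℤ) := rfl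

@[simp]
theorem lift_apply_r_one : lift hx hy hyx (r 1) = x := by
  rw [lift_apply_r, ← Int.cast_one, ZMod.zpow_cast_intCast hx, zpow_one]

@[simp]
theorem lift_apply_sr_zero : lift hx hy hyx (sr 0) = y := by
  rw [lift_apply_sr, ZMod.cast_zero, zpow_zero, mul_one]

end lift

theorem hom_ext {f g : DihedralGroup n →* G} (hr : f (r 1) = g (r 1))
    (hs : f (sr 0) = g (sr 0)) : f = g := by
  have hr' (i : ZMod n) : f (r i) = g (r i) := by
    rw [← ZMod.intCast_zmod_cast i, ← r_one_zpow, map_zpow, map_zpow, hr]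
  ext (i | i)
  · exact hr' i
  · rw [← zero_add i, ← sr_mul_r, map_mul, map_mul, hs, hr']

end DihedralGroup

namespace Stmt0

open PresentedGroup (mk one_of_mem)

abbrev rels : Set (FreeGroup (Fin 3)) := {r₁, r₂, r₃, a, b ^ 3}

theorem mk_a_eq_one : mk rels a = 1 := one_of_mem (by simp)

theorem mk_b_pow_three : mk rels b ^ 3 = 1 := by
  rw [← map_pow]
  exact one_of_mem (by simp)

theorem mk_c_sq : mk rels c ^ 2 = 1 := by
  have h : mk rels r₃ = 1 := one_of_mem (by simp)
  simpa [r₃, mk_a_eq_one, pow_two] using h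

theorem mk_c_mul_mk_b_mul_inv : mk rels c * mk rels b * (mk rels c)⁻¹ = (mk rels b)⁻¹ := by
  have h : mk rels r₂ = 1 := one_of_mem (by simp)
  simp only [r₂, map_mul, map_inv, mk_a_eq_one, one_mul, mul_one] at h
  set B := mk rels b
  set C := mk rels c
  have hB : B * B = B⁻¹ := eq_inv_of_mul_eq_one_left (by rw [← pow_three', mk_b_pow_three])
  have hCB : B = C * (B * B) * C⁻¹ := inv_mul_eq_one.1 (by simpa only [mul_assoc] using h)
  calc C * B * C⁻¹ = (C * B⁻¹ * C⁻¹)⁻¹ := by group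
    _ = (C * (B * B) * C⁻¹)⁻¹ := by rw [hB]
    _ = B⁻¹ := by rw [← hCB]

def toDihedral : PresentedGroup rels →* DihedralGroup 3 :=
  PresentedGroup.toGroup (f := ![1, .r 1, .sr 0]) <| by
    rintro r (rfl | rfl | rfl | rfl | rfl) <;>
      simp only [r₁, r₂, r₃, a, b, c, map_mul, map_inv, map_pow, FreeGroup.lift_apply_of] <;>
      decide

def ofDihedral : DihedralGroup 3 →* PresentedGroup rels :=
  DihedralGroup.lift mk_b_pow_three mk_c_sq mk_c_mul_mk_b_mul_inv

@[simp] theorem toDihedral_mk_a : toDihedral (mk rels a) = 1 := PresentedGroup.toGroup.of _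
@[simp] theorem toDihedral_mk_b : toDihedral (mk rels b) = .r 1 := PresentedGroup.toGroup.of _
@[simp] theorem toDihedral_mk_c : toDihedral (mk rels c) = .sr 0 := PresentedGroup.toGroup.of _

theorem ofDihedral_comp_toDihedral : ofDihedral.comp toDihedral = .id _ := by
  refine PresentedGroup.ext fun i => ?_
  fin_cases i
  · show ofDihedral (toDihedral (mk rels a)) = mk rels a
    simp [mk_a_eq_one]
  · show ofDihedral (toDihedral (mk rels b)) = mk rels b
    simp [ofDihedral]
  · show ofDihedral (toDihedral (mk rels c)) = mk rels c
    simp [ofDihedral]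

theorem toDihedral_comp_ofDihedral : toDihedral.comp ofDihedral = .id _ :=
  DihedralGroup.hom_ext (by simp [ofDihedral]) (by simp [ofDihedral])

/-- Adding the relations `a = 1` and `b³ = 1` to the presentation
`⟨a,b,c | r₁, r₂, r₃⟩` yields the dihedral group of order 6. -/
theorem presented_group_with_extra_relations_iso_dihedral :
    Nonempty
      (PresentedGroup ({r₁, r₂, r₃, a, b ^ 3} : Set (FreeGroup (Fin 3))) ≃*
        DihedralGroup 3) :=
  ⟨toDihedral.toMulEquiv ofDihedral ofDihedral_comp_toDihedral toDihedral_comp_ofDihedral⟩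

end Stmt0
end

section
/- For all nonnegative integers p, q, r, let L be the 4×4 integer matrix with rows (0,1,1,1), (1,p,0,0), (1,0,q,0), (1,0,0,r). Then the cardinality (Nat.card) of the quotient of ℤ⁴ by the image of the linear map v ↦ L·v equals pq + qr + rp. (When pq + qr + rp = 0 the quotient is infinite and its Nat.card is 0, so the equality holds in all cases.) -/
/-!
Over `ℤ`, the quotient of `ℤⁿ` by the image of a square matrix `A` has order `|det A|`
(Smith normal form, available as `Submodule.natAbs_det_equiv`), and is infinite when
`det A = 0`, matching the convention `Nat.card = 0`. Expanding the linking matrix along its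
first row gives `det L = -(pq + qr + rp)`.
-/

open Matrix

theorem infinite_of_linearMap_int_ne_zero {M : Type*} [AddCommGroup M] (φ : M →ₗ[ℤ] ℤ)
    (hφ : φ ≠ 0) : Infinite M := by
  obtain ⟨x, hx⟩ : ∃ x, φ x ≠ 0 := by
    by_contra! h
    exact hφ (LinearMap.ext h)
  refine Infinite.of_injective (fun k : ℤ => k • x) fun k l hkl => ?_
  have : k * φ x = l * φ x := by simpa using congrArg φ hkl
  exact mul_right_cancel₀ hx this

namespace Matrix

variable {n : Type*} [Fintype n] [DecidableEq n]

theorem infinite_quotient_range_mulVecLin_of_det_eq_zero {A : Matrix n n ℤ} (hA : A.det = 0) :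
    Infinite ((n → ℤ) ⧸ LinearMap.range A.mulVecLin) := by
  obtain ⟨w, hw, hwA⟩ := exists_vecMul_eq_zero_iff.mpr hA
  -- A nonzero left null vector `w` is a functional killing the range, so it descends.
  let N := LinearMap.range A.mulVecLin
  have hN : N ≤ LinearMap.ker (dotProductEquiv ℤ n w) := by
    rintro _ ⟨v, rfl⟩
    simp [dotProduct_mulVec, hwA]
  refine infinite_of_linearMap_int_ne_zero (N.liftQ _ hN) fun h => hw ?_
  apply (dotProductEquiv ℤ n).injective
  rw [map_zero, ← N.liftQ_mkQ _ hN, h, LinearMap.zero_comp]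

theorem natCard_quotient_range_mulVecLin_of_det_ne_zero {A : Matrix n n ℤ} (hA : A.det ≠ 0) :
    Nat.card ((n → ℤ) ⧸ LinearMap.range A.mulVecLin) = A.det.natAbs := by
  let e := LinearEquiv.ofInjective A.mulVecLin (mulVec_injective_of_det_ne_zero hA)
  rw [← Submodule.natAbs_det_equiv _ e, ← LinearMap.det_toLin' A]
  rfl

theorem natCard_quotient_range_mulVecLin (A : Matrix n n ℤ) :
    Nat.card ((n → ℤ) ⧸ LinearMap.range A.mulVecLin) = A.det.natAbs := by
  by_cases hA : A.det = 0
  · have := infinite_quotient_range_mulVecLin_of_det_eq_zero hA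
    rw [hA, Nat.card_eq_zero_of_infinite, Int.natAbs_zero]
  · exact natCard_quotient_range_mulVecLin_of_det_ne_zero hA

end Matrix

theorem det_linking_matrix (p q r : ℤ) :
    !![0, 1, 1, 1; 1, p, 0, 0; 1, 0, q, 0; 1, 0, 0, r].det = -(p * q + q * r + r * p) := by
  simp [det_succ_row_zero, Fin.sum_univ_succ, Fin.succAbove]
  ring

/-- The order of the quotient of `ℤ⁴` by the image of the linear map given by
the linking matrix of the surgery diagram for the 3-manifold supported by the
pair-of-pants open book `(P, τ₀^p τ₁^q τ₂^r)` is `pq + qr + rp` (with the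
convention that `Nat.card` of an infinite group is `0`). -/
theorem card_quotient_linking_matrix (p q r : ℕ) :
    Nat.card
        ((Fin 4 → ℤ) ⧸ LinearMap.range
          (Matrix.mulVecLin
            !![0, 1, 1, 1; 1, (p : ℤ), 0, 0; 1, 0, (q : ℤ), 0; 1, 0, 0, (r : ℤ)])) =
      p * q + q * r + r * p := by
  rw [natCard_quotient_range_mulVecLin, det_linking_matrix]
  omega
end
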